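/- arXiv:1502.05105 — 6 statements merged into one kernel-verified Lean document; each statement's English description precedes it below -/
import Mathlib

section
/- For each positive integer n, every integer solution (x₁,...,x_{n+4}) of the system {xᵢ·xᵢ = x_{i+1} for i ∈ {1,...,n}, x_{n+2}+1 = x₁, x_{n+3}+1 = x_{n+2}, x_{n+3}·x_{n+4} = x_{n+1}} satisfies |xᵢ| ≤ (2+2^(2^n))^(2^n) for all i ∈ {1,...,n+4}. -/
/-!
Writing `a = x 1`, the squaring equations give `x (k + 1) = a ^ 2 ^ k` for `k ≤ n`, and the
remaining ones say `x (n + 2) = a - 1`, `x (n + 3) = a - 2` and `(a - 2) * x (n + 4) = a ^ 2 ^ n`.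
Since `a - 2 ∣ a ^ 2 ^ n - 2 ^ 2 ^ n`, the divisor `a - 2` of `a ^ 2 ^ n` also divides `2 ^ 2 ^ n`,
so `|a - 2| ≤ 2 ^ 2 ^ n` and `|a| ≤ 2 + 2 ^ 2 ^ n`; the powers of `a`, `a - 1` and `a - 2` are
then within the bound. Moreover `a ≠ 2`, as otherwise `0 = a ^ 2 ^ n`, so dividing by
`a - 2` cannot enlarge `|x (n + 4)|`.
-/

theorem eq_pow_two_pow_of_mul_self_eq {M : Type*} [Monoid M] {n : ℕ} {x : ℕ → M}
    (hsq : ∀ i, 1 ≤ i → i ≤ n → x i * x i = x (i + 1)) :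
    ∀ k ≤ n, x (k + 1) = x 1 ^ 2 ^ k := by
  intro k hk
  induction k with
  | zero => simp
  | succ k ih => rw [← hsq (k + 1) (by omega) hk, ih (by omega), ← sq, ← pow_mul, pow_succ]

theorem Int.abs_sub_le_pow_of_sub_dvd_pow {a b : ℤ} {m : ℕ} (hb : b ≠ 0) (h : a - b ∣ a ^ m) :
    |a - b| ≤ |b| ^ m := by
  have hdvd : a - b ∣ b ^ m := (dvd_sub_right h).mp (sub_dvd_pow_sub_pow a b m)
  rw [← abs_pow]
  exact Int.le_of_dvd (abs_pos.mpr (pow_ne_zero m hb)) ((abs_dvd_abs _ _).mpr hdvd)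

theorem sub_ne_zero_of_sub_dvd_pow {R : Type*} [CommRing R] [IsReduced R] {a b : R} {m : ℕ}
    (hb : b ≠ 0) (h : a - b ∣ a ^ m) : a - b ≠ 0 := by
  intro hab
  rw [hab, zero_dvd_iff, sub_eq_zero.mp hab] at h
  exact hb (eq_zero_of_pow_eq_zero h)

theorem Int.abs_le_of_mul_eq {c y z : ℤ} (hc : c ≠ 0) (h : c * y = z) : |y| ≤ |z| := by
  rw [← h, abs_mul]
  exact le_mul_of_one_le_left (abs_nonneg y) (Int.one_le_abs hc)

theorem stmt_5 : ∀ n : ℕ, 0 < n → ∀ x : ℕ → ℤ,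
    (∀ i, 1 ≤ i → i ≤ n → x i * x i = x (i + 1)) →
    x (n + 2) + 1 = x 1 →
    x (n + 3) + 1 = x (n + 2) →
    x (n + 3) * x (n + 4) = x (n + 1) →
    ∀ i, 1 ≤ i → i ≤ n + 4 → |x i| ≤ (2 + 2 ^ (2 ^ n)) ^ (2 ^ n) := by
  intro n _ x hsq h2 h3 h4 i hi1 hi2
  set B : ℤ := 2 + 2 ^ 2 ^ n
  have hpow := eq_pow_two_pow_of_mul_self_eq hsq
  have hx3 : x (n + 3) = x 1 - 2 := by omega
  have hdvd : x 1 - 2 ∣ x 1 ^ 2 ^ n := ⟨x (n + 4), by rw [← hx3, h4, hpow n le_rfl]⟩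
  have hx3_le : |x 1 - 2| ≤ 2 ^ 2 ^ n := by
    simpa using Int.abs_sub_le_pow_of_sub_dvd_pow two_ne_zero hdvd
  have hx1_le : |x 1| ≤ B := by
    have := abs_le.mp hx3_le
    exact abs_le.mpr (by omega)
  have h2pos : (0 : ℤ) < 2 ^ 2 ^ n := by positivity
  have hB : 2 ^ 2 ^ n + 1 ≤ B ^ 2 ^ n :=
    (by omega : 2 ^ 2 ^ n + 1 ≤ B).trans (le_self_pow₀ (by omega) (pow_ne_zero _ two_ne_zero))
  have hpow_le : ∀ k ≤ n, |x (k + 1)| ≤ B ^ 2 ^ n := fun k hk => by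
    rw [hpow k hk, abs_pow]
    exact (pow_le_pow_left₀ (abs_nonneg _) hx1_le _).trans
      (pow_le_pow_right₀ (by omega) (Nat.pow_le_pow_right two_pos hk))
  obtain ⟨k, hk, rfl⟩ | rfl | rfl | rfl : (∃ k ≤ n, i = k + 1) ∨ i = n + 2 ∨ i = n + 3 ∨ i = n + 4 := by
    by_cases hi : i ≤ n + 1
    · exact Or.inl ⟨i - 1, by omega, by omega⟩
    · omega
  · exact hpow_le k hk
  · have := abs_le.mp hx3_le
    exact abs_le.mpr (by omega)
  · rw [hx3]; omega
  · have hne : x (n + 3) ≠ 0 := hx3 ▸ sub_ne_zero_of_sub_dvd_pow two_ne_zero hdvd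
    exact (Int.abs_le_of_mul_eq hne h4).trans (hpow_le n le_rfl)
end

section
/- For each positive integer n, the system {xᵢ·xᵢ = x_{i+1} for i ∈ {1,...,n}, x_{n+2}+1 = x₁, x_{n+3}+1 = x_{n+2}, x_{n+3}·x_{n+4} = x_{n+1}} has only finitely many integer solutions. -/
/-!
With `a = x₀`, the squaring equations force `xᵢ = a ^ 2 ^ i` for `i ≤ n`, and the next two give
`x_{n+1} = a - 1`, `x_{n+2} = a - 2`; the last one then reads `(a - 2) * x_{n+3} = a ^ 2 ^ n`.
Since `a ≡ 2 [ZMOD a - 2]`, the nonzero integer `a - 2` divides `2 ^ 2 ^ n`, which bounds `a`,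
and `a` determines the whole solution.
-/

theorem sub_ne_zero_of_mul_eq_pow {R : Type*} [Ring R] [NoZeroDivisors R] {a b y : R} {k : ℕ}
    (hb : b ≠ 0) (h : (a - b) * y = a ^ k) : a - b ≠ 0 := by
  rintro hab
  rw [hab, zero_mul, sub_eq_zero.mp hab] at h
  exact pow_ne_zero k hb h.symm

theorem Int.abs_sub_le_pow_of_mul_eq_pow {a b y : ℤ} {k : ℕ} (hb : b ≠ 0)
    (h : (a - b) * y = a ^ k) : |a - b| ≤ |b| ^ k := by
  have hdvd : a - b ∣ b ^ k :=
    (dvd_sub_right (Dvd.intro y h)).mp (sub_dvd_pow_sub_pow a b k)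
  rw [← abs_pow]
  exact Int.le_of_dvd (abs_pos.mpr (pow_ne_zero k hb)) ((abs_dvd_abs _ _).mpr hdvd)

-- Indices start at `0`: `x i` is the unknown `x_{i+1}` of the system.
def IsSolution (n : ℕ) (x : Fin (n + 4) → ℤ) : Prop :=
  (∀ i : ℕ, ∀ h : i < n,
    x ⟨i, by linarith⟩ * x ⟨i, by linarith⟩ = x ⟨i + 1, by linarith⟩) ∧
  x ⟨n + 1, by linarith⟩ + 1 = x ⟨0, by linarith⟩ ∧
  x ⟨n + 2, by linarith⟩ + 1 = x ⟨n + 1, by linarith⟩ ∧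
  x ⟨n + 2, by linarith⟩ * x ⟨n + 3, by linarith⟩ = x ⟨n, by linarith⟩

namespace IsSolution

variable {n : ℕ} {x y : Fin (n + 4) → ℤ}

theorem eq_pow (hx : IsSolution n x) :
    ∀ i (h : i ≤ n), x ⟨i, by linarith⟩ = x 0 ^ 2 ^ i
  | 0, _ => by simp
  | i + 1, h => by
    rw [← hx.1 i h, eq_pow hx i (by omega), ← pow_add, pow_succ, mul_two]

theorem eq_sub_one (hx : IsSolution n x) : x ⟨n + 1, by linarith⟩ = x 0 - 1 :=
  eq_sub_of_add_eq hx.2.1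

theorem eq_sub_two (hx : IsSolution n x) : x ⟨n + 2, by linarith⟩ = x 0 - 2 := by
  rw [eq_sub_of_add_eq hx.2.2.1, hx.eq_sub_one]
  ring

theorem sub_two_mul_eq_pow (hx : IsSolution n x) :
    (x 0 - 2) * x ⟨n + 3, by linarith⟩ = x 0 ^ 2 ^ n := by
  rw [← hx.eq_sub_two, hx.2.2.2, hx.eq_pow n le_rfl]

theorem abs_sub_two_le (hx : IsSolution n x) : |x 0 - 2| ≤ 2 ^ 2 ^ n := by
  simpa using Int.abs_sub_le_pow_of_mul_eq_pow two_ne_zero hx.sub_two_mul_eq_pow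

theorem eq_of_head_eq (hx : IsSolution n x) (hy : IsSolution n y) (h0 : x 0 = y 0) :
    x = y := by
  funext ⟨i, hi⟩
  obtain hi' | rfl | rfl | rfl : i ≤ n ∨ i = n + 1 ∨ i = n + 2 ∨ i = n + 3 := by omega
  · rw [hx.eq_pow i hi', hy.eq_pow i hi', h0]
  · rw [hx.eq_sub_one, hy.eq_sub_one, h0]
  · rw [hx.eq_sub_two, hy.eq_sub_two, h0]
  · apply mul_left_cancel₀ (sub_ne_zero_of_mul_eq_pow two_ne_zero hx.sub_two_mul_eq_pow)
    rw [hx.sub_two_mul_eq_pow, h0, hy.sub_two_mul_eq_pow]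

variable (n) in
theorem finite : {x | IsSolution n x}.Finite := by
  refine Set.Finite.of_finite_image (f := fun x ↦ x 0) ?_ fun x hx y hy ↦ eq_of_head_eq hx hy
  refine (Set.finite_Icc (2 - 2 ^ 2 ^ n : ℤ) (2 + 2 ^ 2 ^ n)).subset ?_
  rintro _ ⟨x, hx, rfl⟩
  obtain ⟨hle, hge⟩ := abs_sub_le_iff.mp hx.abs_sub_two_le
  constructor <;> linarith

end IsSolution

theorem stmt_6 : ∀ n : ℕ, 0 < n →
    Set.Finite {x : Fin (n + 4) → ℤ |
      (∀ i : ℕ, ∀ h : i < n,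
        x ⟨i, by omega⟩ * x ⟨i, by omega⟩ = x ⟨i + 1, by omega⟩) ∧
      x ⟨n + 1, by omega⟩ + 1 = x ⟨0, by omega⟩ ∧
      x ⟨n + 2, by omega⟩ + 1 = x ⟨n + 1, by omega⟩ ∧
      x ⟨n + 2, by omega⟩ * x ⟨n + 3, by omega⟩ = x ⟨n, by omega⟩} := by
  intro n _
  exact IsSolution.finite n
end

section
/- For each positive integer n, the tuple given by xᵢ = (2+2^(2^n))^(2^(i-1)) for i ∈ {1,...,n+1}, x_{n+2} = 1+2^(2^n), x_{n+3} = 2^(2^n), and x_{n+4} = (1+2^(2^n - 1))^(2^n) is a solution in positive integers of the system {xᵢ·xᵢ = x_{i+1} for i ∈ {1,...,n}, x_{n+2}+1 = x₁, x_{n+3}+1 = x_{n+2}, x_{n+3}·x_{n+4} = x_{n+1}}. -/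
theorem pow_two_pow_mul_self {M : Type*} [Monoid M] (a : M) (k : ℕ) :
    a ^ 2 ^ k * a ^ 2 ^ k = a ^ 2 ^ (k + 1) := by
  rw [← pow_add, ← two_mul, ← pow_succ']

theorem two_mul_one_add_two_pow_pred {m : ℕ} (hm : 0 < m) :
    2 * (1 + 2 ^ (m - 1)) = 2 + 2 ^ m := by
  rw [mul_add, mul_one, ← pow_succ', Nat.sub_add_cancel hm]

theorem stmt_7 : ∀ n : ℕ, 0 < n → ∀ x : ℕ → ℕ,
    (∀ i, 1 ≤ i → i ≤ n + 1 → x i = (2 + 2 ^ (2 ^ n)) ^ (2 ^ (i - 1))) →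
    x (n + 2) = 1 + 2 ^ (2 ^ n) →
    x (n + 3) = 2 ^ (2 ^ n) →
    x (n + 4) = (1 + 2 ^ (2 ^ n - 1)) ^ (2 ^ n) →
    (∀ i, 1 ≤ i → i ≤ n + 4 → 0 < x i) ∧
    (∀ i, 1 ≤ i → i ≤ n → x i * x i = x (i + 1)) ∧
    x (n + 2) + 1 = x 1 ∧
    x (n + 3) + 1 = x (n + 2) ∧
    x (n + 3) * x (n + 4) = x (n + 1) := by
  intro n hn x hx hx2 hx3 hx4
  have hx1 : x 1 = 2 + 2 ^ 2 ^ n := by simpa using hx 1 le_rfl (by omega)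
  have hxn1 : x (n + 1) = (2 + 2 ^ 2 ^ n) ^ 2 ^ n := by simpa using hx (n + 1) (by omega) le_rfl
  refine ⟨?_, ?_, ?_, ?_, ?_⟩
  · intro i hi hi4
    obtain hin | rfl | rfl | rfl : i ≤ n + 1 ∨ i = n + 2 ∨ i = n + 3 ∨ i = n + 4 := by omega
    · rw [hx i hi hin]; positivity
    · rw [hx2]; positivity
    · rw [hx3]; positivity
    · rw [hx4]; positivity
  · intro i hi hin
    obtain ⟨k, rfl⟩ : ∃ k, i = k + 1 := ⟨i - 1, by omega⟩
    rw [hx (k + 1) hi (by omega), hx (k + 2) (by omega) (by omega)]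
    exact pow_two_pow_mul_self _ k
  · rw [hx2, hx1]; ring
  · rw [hx3, hx2, add_comm]
  · rw [hx3, hx4, hxn1, ← mul_pow, two_mul_one_add_two_pow_pred (by positivity)]
end

section
/- For each positive integer n, every positive integer solution of the system {xᵢ·xᵢ = x_{i+1} for i ∈ {1,...,n}, x_{n+2}+1 = x₁, x_{n+3}+1 = x_{n+2}, x_{n+3}·x_{n+4} = x_{n+1}} satisfies x₁ ≤ 2 + 2^(2^n), and the maximal such value x₁ = 2 + 2^(2^n) is attained by some positive integer solution. -/
/-!
Put `a = x (n+3)`. Then `x 1 = a + 2` and `x (n+1) = (a+2)^(2^n)`, so the last equation says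
`a ∣ (a+2)^(2^n)`. Since `a + 2 ≡ 2 [MOD a]` this means `a ∣ 2^(2^n)`, hence `a ≤ 2^(2^n)`.
Conversely every positive `a ∣ (a+2)^(2^n)` gives a solution with `x 1 = a + 2`,
and `a = 2^(2^n)` is such a divisor.
-/

theorem Nat.dvd_add_self_left_pow_iff {a b : ℕ} (k : ℕ) : a ∣ (a + b) ^ k ↔ a ∣ b ^ k :=
  (Nat.add_modEq_left.pow k).dvd_iff dvd_rfl

theorem pow_two_pow_of_mul_self_eq {M : Type*} [Monoid M] {n : ℕ} {x : ℕ → M}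
    (hsq : ∀ i, 1 ≤ i → i ≤ n → x i * x i = x (i + 1)) :
    ∀ i ≤ n, x (i + 1) = x 1 ^ 2 ^ i
  | 0, _ => by simp
  | i + 1, hi => by
    rw [← hsq (i + 1) (by omega) hi, pow_two_pow_of_mul_self_eq hsq i (by omega), pow_succ,
      pow_mul, sq]

def IsSquaringSolution (n : ℕ) (x : ℕ → ℕ) : Prop :=
  (∀ i, 1 ≤ i → i ≤ n + 4 → 0 < x i) ∧
  (∀ i, 1 ≤ i → i ≤ n → x i * x i = x (i + 1)) ∧
  x (n + 2) + 1 = x 1 ∧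
  x (n + 3) + 1 = x (n + 2) ∧
  x (n + 3) * x (n + 4) = x (n + 1)

namespace IsSquaringSolution

variable {n : ℕ} {x : ℕ → ℕ}

theorem dvd (hx : IsSquaringSolution n x) : x (n + 3) ∣ (x (n + 3) + 2) ^ 2 ^ n := by
  obtain ⟨-, hsq, h2, h3, h4⟩ := hx
  have hx1 : x 1 = x (n + 3) + 2 := by omega
  exact ⟨x (n + 4), by rw [← hx1, ← pow_two_pow_of_mul_self_eq hsq n le_rfl, h4]⟩

theorem le (hx : IsSquaringSolution n x) : x 1 ≤ 2 + 2 ^ 2 ^ n := by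
  have hpos : 0 < x (n + 3) := hx.1 (n + 3) (by omega) (by omega)
  have hle : x (n + 3) ≤ 2 ^ 2 ^ n :=
    Nat.le_of_dvd (by positivity) ((Nat.dvd_add_self_left_pow_iff _).mp hx.dvd)
  obtain ⟨-, -, h₂, h₃, -⟩ := hx
  omega

end IsSquaringSolution

/-- The solution with `x (n+3) = a`; its value at `0` is arbitrary, the system not involving `x 0`. -/
def squaringSolution (n a : ℕ) (i : ℕ) : ℕ :=
  if i ≤ n + 1 then (a + 2) ^ 2 ^ (i - 1)
  else if i = n + 2 then a + 1
  else if i = n + 3 then a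
  else (a + 2) ^ 2 ^ n / a

theorem isSquaringSolution_squaringSolution {n a : ℕ} (ha : 0 < a)
    (hdvd : a ∣ (a + 2) ^ 2 ^ n) : IsSquaringSolution n (squaringSolution n a) := by
  refine ⟨fun i _ _ => ?_, fun i hi hin => ?_, ?_, ?_, ?_⟩ <;> unfold squaringSolution
  · split_ifs
    all_goals first | positivity | exact Nat.div_pos (Nat.le_of_dvd (by positivity) hdvd) ha
  · obtain ⟨j, rfl⟩ : ∃ j, i = j + 1 := ⟨i - 1, by omega⟩
    rw [if_pos (by omega), if_pos (by omega), Nat.add_sub_cancel, Nat.add_sub_cancel, ← pow_add,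
      pow_succ, mul_two]
  · simp [show ¬ n + 2 ≤ n + 1 by omega]
  · simp [show ¬ n + 3 ≤ n + 1 by omega]
  · simp only [show ¬ n + 3 ≤ n + 1 by omega, show ¬ n + 4 ≤ n + 1 by omega,
      show n + 3 ≠ n + 2 by omega, show n + 4 ≠ n + 2 by omega, show n + 4 ≠ n + 3 by omega,
      le_refl, if_true, if_false, Nat.add_sub_cancel]
    exact Nat.mul_div_cancel' hdvd

theorem squaringSolution_one (n a : ℕ) : squaringSolution n a 1 = a + 2 := by
  simp [squaringSolution]

theorem stmt_9 : ∀ n : ℕ, 0 < n →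
    (∀ x : ℕ → ℕ,
      (∀ i, 1 ≤ i → i ≤ n + 4 → 0 < x i) →
      (∀ i, 1 ≤ i → i ≤ n → x i * x i = x (i + 1)) →
      x (n + 2) + 1 = x 1 →
      x (n + 3) + 1 = x (n + 2) →
      x (n + 3) * x (n + 4) = x (n + 1) →
      x 1 ≤ 2 + 2 ^ (2 ^ n)) ∧
    (∃ x : ℕ → ℕ,
      (∀ i, 1 ≤ i → i ≤ n + 4 → 0 < x i) ∧
      (∀ i, 1 ≤ i → i ≤ n → x i * x i = x (i + 1)) ∧
      x (n + 2) + 1 = x 1 ∧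
      x (n + 3) + 1 = x (n + 2) ∧
      x (n + 3) * x (n + 4) = x (n + 1) ∧
      x 1 = 2 + 2 ^ (2 ^ n)) := by
  intro n _
  refine ⟨fun x h₁ h₂ h₃ h₄ h₅ => IsSquaringSolution.le ⟨h₁, h₂, h₃, h₄, h₅⟩, ?_⟩
  have hdvd : 2 ^ 2 ^ n ∣ (2 ^ 2 ^ n + 2) ^ 2 ^ n :=
    (Nat.dvd_add_self_left_pow_iff _).mpr dvd_rfl
  obtain ⟨h₁, h₂, h₃, h₄, h₅⟩ := isSquaringSolution_squaringSolution (by positivity) hdvd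
  exact ⟨_, h₁, h₂, h₃, h₄, h₅, by rw [squaringSolution_one, add_comm]⟩
end

section
/- For all positive integers x, y, z: x + y = z if and only if S(z·x)·S(z·y) = S((z·z)·S(x·y)), where S denotes the successor function S(n) = n + 1. -/
theorem mul_add_one_mul_mul_add_one_eq_iff {R : Type*} [CommSemiring R] [IsCancelAdd R]
    (x y z : R) :
    (z * x + 1) * (z * y + 1) = z * z * (x * y + 1) + 1 ↔ z * (x + y) = z * z := by
  have lhs : (z * x + 1) * (z * y + 1) = z * z * (x * y) + (z * (x + y) + 1) := by ring
  have rhs : z * z * (x * y + 1) + 1 = z * z * (x * y) + (z * z + 1) := by ring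
  rw [lhs, rhs, add_right_inj, add_left_inj]

theorem stmt_10 : ∀ x y z : ℕ, 0 < x → 0 < y → 0 < z →
    (x + y = z ↔ (z * x + 1) * (z * y + 1) = (z * z) * (x * y + 1) + 1) := by
  intro x y z _ _ hz
  rw [mul_add_one_mul_mul_add_one_eq_iff, mul_right_inj' hz.ne']
end

section
/- For each integer k ≥ 3, the system {xᵢ·xᵢ = x_{i+1} for i ∈ {1,...,k}, x_{k+2}+x_{k+2} = x_{k+3}, x_{k+2}·x_{k+2} = x_{k+3}, x_{k+4}+x_{k+3} = x₁, x_{k+4}·x_{k+5} = x_{k+1}} has a positive integer solution in n = k+5 variables with some coordinate exceeding 2^(2^(n-1)). -/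
/-!
Take x₁ = a, so the squaring chain forces xᵢ = a^(2^(i-1)) for i ≤ k+1, while x_{k+2} = 2,
x_{k+3} = 4, x_{k+4} = a - 4 and x_{k+5} = a^(2^k) / (a - 4). This is a solution as soon as
a - 4 divides a^(2^k). For a = 2^16 + 4 = 4 · 16385 we have a - 4 = 4^8 ∣ 4^(2^k) once k ≥ 3, and
x_{k+1} = a^(2^k) > (2^16)^(2^k) = 2^(2^(k+4)).
-/

def IsSquaringSystemSolution (k : ℕ) (x : ℕ → ℕ) : Prop :=
  (∀ i, 1 ≤ i → i ≤ k + 5 → 0 < x i) ∧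
  (∀ i, 1 ≤ i → i ≤ k → x i * x i = x (i + 1)) ∧
  x (k + 2) + x (k + 2) = x (k + 3) ∧
  x (k + 2) * x (k + 2) = x (k + 3) ∧
  x (k + 4) + x (k + 3) = x 1 ∧
  x (k + 4) * x (k + 5) = x (k + 1)

theorem exists_isSquaringSystemSolution {k b c : ℕ} (hb : 0 < b) (hc : (b + 4) ^ 2 ^ k = b * c) :
    ∃ x, IsSquaringSystemSolution k x ∧ x (k + 1) = (b + 4) ^ 2 ^ k := by
  have hc_pos : 0 < c := Nat.pos_of_mul_pos_left (hc ▸ by positivity : 0 < b * c)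
  refine ⟨fun i => if i ≤ k + 1 then (b + 4) ^ 2 ^ (i - 1) else if i = k + 2 then 2
    else if i = k + 3 then 4 else if i = k + 4 then b else c, ⟨?_, ?_, ?_, ?_, ?_, ?_⟩, ?_⟩
  · intro i _ _
    dsimp only
    split_ifs <;> positivity
  · intro i hi₁ hik
    obtain ⟨j, rfl⟩ : ∃ j, i = j + 1 := ⟨i - 1, by omega⟩
    simp only [if_pos (by omega : j + 1 ≤ k + 1), if_pos (by omega : j + 1 + 1 ≤ k + 1),
      Nat.add_sub_cancel]
    ring
  all_goals simp (disch := omega) [hc]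

theorem four_pow_eight_dvd_mul_pow_two_pow {k : ℕ} (hk : 3 ≤ k) (m : ℕ) :
    4 ^ 8 ∣ (4 * m) ^ 2 ^ k := by
  rw [mul_pow]
  exact dvd_mul_of_dvd_left (pow_dvd_pow 4 (Nat.pow_le_pow_right two_pos hk)) _

theorem two_pow_two_pow_add_four_lt (k : ℕ) : 2 ^ 2 ^ (k + 4) < (2 ^ 16 + 4) ^ 2 ^ k := by
  rw [pow_add, mul_comm, pow_mul]
  exact Nat.pow_lt_pow_left (by norm_num) (by positivity)

theorem stmt_14 : ∀ k : ℕ, 3 ≤ k →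
    ∃ x : ℕ → ℕ,
      (∀ i, 1 ≤ i → i ≤ k + 5 → 0 < x i) ∧
      (∀ i, 1 ≤ i → i ≤ k → x i * x i = x (i + 1)) ∧
      x (k + 2) + x (k + 2) = x (k + 3) ∧
      x (k + 2) * x (k + 2) = x (k + 3) ∧
      x (k + 4) + x (k + 3) = x 1 ∧
      x (k + 4) * x (k + 5) = x (k + 1) ∧
      ∃ i, 1 ≤ i ∧ i ≤ k + 5 ∧ 2 ^ (2 ^ (k + 5 - 1)) < x i := by
  intro k hk
  obtain ⟨c, hc⟩ : 2 ^ 16 ∣ (2 ^ 16 + 4) ^ 2 ^ k := four_pow_eight_dvd_mul_pow_two_pow hk 16385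
  obtain ⟨x, ⟨hpos, hsq, hadd, hmul, hsum, hprod⟩, hx⟩ :=
    exists_isSquaringSystemSolution (by norm_num) hc
  refine ⟨x, hpos, hsq, hadd, hmul, hsum, hprod, k + 1, by omega, by omega, ?_⟩
  rw [hx]
  exact two_pow_two_pow_add_four_lt k
end
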